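/- There is an instance of Seat Arrangement with binary and symmetric preferences that has no envy-free arrangement: for the three agents x, y, z with f_p(q) = 1 for all distinct p, q ∈ {x, y, z}, and the seat graph being a path on 3 vertices, no arrangement is envy-free. -/

import Mathlib

open scoped Classical

noncomputable section

namespace SeatArrangement

variable {P V : Type*}

/-- The utility of agent `p` under arrangement `π`:
the sum, over the seat-graph neighbors `v` of `π p`, of `p`'s preference for the agent seated
at `v`. -/
def utility [Fintype V] (G : SimpleGraph V) (f : P → P → ℝ) (π : P ≃ V) (p : P) : ℝ :=
  ∑ v : V, if G.Adj (π p) v then f p (π.symm v) else 0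

/-- The social welfare of an arrangement: the sum of the utilities of all agents. -/
def sw [Fintype P] [Fintype V] (G : SimpleGraph V) (f : P → P → ℝ) (π : P ≃ V) : ℝ :=
  ∑ p : P, utility G f π p

/-- The `(p,q)`-swap arrangement of `π`. -/
def swapArr (π : P ≃ V) (p q : P) : P ≃ V := (Equiv.swap p q).trans π

/-- `{p, q}` is a blocking pair for `π`: both agents strictly improve by swapping seats. -/
def blocking [Fintype V] (G : SimpleGraph V) (f : P → P → ℝ) (π : P ≃ V) (p q : P) : Prop :=
  p ≠ q ∧ utility G f π p < utility G f (swapArr π p q) p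
        ∧ utility G f π q < utility G f (swapArr π p q) q

/-- An arrangement is stable if it has no blocking pair. -/
def stable [Fintype V] (G : SimpleGraph V) (f : P → P → ℝ) (π : P ≃ V) : Prop :=
  ∀ p q : P, ¬ blocking G f π p q

/-- An arrangement is envy-free if no agent would strictly improve by taking
another agent's seat (via a swap). -/
def envyFree [Fintype V] (G : SimpleGraph V) (f : P → P → ℝ) (π : P ≃ V) : Prop :=
  ∀ p q : P, p ≠ q → utility G f (swapArr π p q) p ≤ utility G f π p

/-- The least utility of an agent under `π` (for a finite nonempty set of agents, the
infimum of the range of utilities is the minimum utility). -/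
def minUtil [Fintype V] (G : SimpleGraph V) (f : P → P → ℝ) (π : P ≃ V) : ℝ :=
  sInf (Set.range (utility G f π))

/-- A maximin arrangement maximizes the least utility of an agent. -/
def maximin [Fintype V] (G : SimpleGraph V) (f : P → P → ℝ) (πf : P ≃ V) : Prop :=
  ∀ π : P ≃ V, minUtil G f π ≤ minUtil G f πf

/-- A maximum arrangement maximizes the social welfare. -/
def maximum [Fintype P] [Fintype V] (G : SimpleGraph V) (f : P → P → ℝ) (πm : P ≃ V) : Prop :=
  ∀ π : P ≃ V, sw G f π ≤ sw G f πm

end SeatArrangement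

open SeatArrangement

/-- The path on three vertices `0 - 1 - 2` (center `1`). -/
def path3 : SimpleGraph (Fin 3) where
  Adj i j := i ≠ j ∧ (i = 1 ∨ j = 1)
  symm := by
    refine ⟨?_⟩
    intro i j h
    exact ⟨h.1.symm, h.2.symm⟩
  loopless := by
    refine ⟨?_⟩
    intro i h
    exact h.1 rfl

/-! When every agent likes every other agent equally, an agent's utility is just the degree of
its seat, so envy-freeness forces all seats to have the same degree. The path on three vertices
is not regular. -/

namespace SeatArrangement

variable {P V : Type*}

theorem swapArr_apply_left (π : P ≃ V) (p q : P) : swapArr π p q p = π q := by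
  simp [swapArr]

variable [Fintype V] {G : SimpleGraph V} {f : P → P → ℝ}

theorem utility_eq_degree [DecidableRel G.Adj] (hf : ∀ p q : P, p ≠ q → f p q = 1)
    (π : P ≃ V) (p : P) : utility G f π p = G.degree (π p) := by
  have hone : ∀ v, G.Adj (π p) v → f p (π.symm v) = 1 := fun v hv =>
    hf _ _ fun h => hv.ne (by rw [h, π.apply_symm_apply])
  rw [utility, ← G.card_neighborFinset_eq_degree, G.neighborFinset_eq_filter,
    Finset.natCast_card_filter]
  exact Finset.sum_congr rfl fun v _ => by split_ifs with hv <;> simp_all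

theorem degree_le_of_envyFree [DecidableRel G.Adj] (hf : ∀ p q : P, p ≠ q → f p q = 1)
    {π : P ≃ V} (h : envyFree G f π) (u w : V) : G.degree w ≤ G.degree u := by
  obtain ⟨p, rfl⟩ := π.surjective u
  obtain ⟨q, rfl⟩ := π.surjective w
  rcases eq_or_ne p q with rfl | hpq
  · rfl
  have := h p q hpq
  rwa [utility_eq_degree hf, utility_eq_degree hf, swapArr_apply_left, Nat.cast_le] at this

theorem degree_eq_of_envyFree [DecidableRel G.Adj] (hf : ∀ p q : P, p ≠ q → f p q = 1)
    {π : P ≃ V} (h : envyFree G f π) (u w : V) : G.degree u = G.degree w :=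
  le_antisymm (degree_le_of_envyFree hf h w u) (degree_le_of_envyFree hf h u w)

end SeatArrangement

instance : DecidableRel path3.Adj := fun i j =>
  inferInstanceAs (Decidable (i ≠ j ∧ (i = 1 ∨ j = 1)))

theorem no_envyFree_path3 (f : Fin 3 → Fin 3 → ℝ)
    (hf : ∀ p q : Fin 3, p ≠ q → f p q = 1) :
    ∀ π : Fin 3 ≃ Fin 3, ¬ envyFree path3 f π :=
  fun _ h => absurd (degree_eq_of_envyFree hf h 0 1) (by decide)
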